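/- For every a ∈ ℝ^{n+1} with a(ζ_j) ≠ 0 for all j, one has T_γ(a) b = T_n(a) a; equivalently, Σ_{k=0}^n b_k γ_{k−i}(a) = Σ_{k=0}^n c̃_{i−k}(a) a_k for every i = 0, 1, …, n (where c̃_{−k}(a) = c̃_k(a)). -/

import Mathlib

open Finset Complex Matrix

noncomputable section

/-- The point `ζ_j = exp(iπ j / N)` of the discrete unit circle `𝕋_{2N}`. -/
def zeta (N : ℕ) (j : ℤ) : ℂ := Complex.exp (Real.pi * Complex.I * j / N)

/-- The index set `j = -N+1, …, N`. -/
def Idx (N : ℕ) : Finset ℤ := Finset.Icc (-(N : ℤ) + 1) (N : ℤ)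

/-- `a(ζ) = Σ_{k=0}^n a_k ζ^{-k}`. -/
def evC {n : ℕ} (a : Fin (n + 1) → ℝ) (z : ℂ) : ℂ :=
  ∑ k : Fin (n + 1), (a k : ℂ) * z ^ (-(k.val : ℤ))

/-- The symmetric Toeplitz matrix `T_n` with `(i,j)` entry `c_{|i-j|}`. -/
def Toep {n : ℕ} (c : Fin (n + 1) → ℝ) : Matrix (Fin (n + 1)) (Fin (n + 1)) ℝ :=
  fun i j => c ⟨max ((i : ℕ) - (j : ℕ)) ((j : ℕ) - (i : ℕ)),
    by have := i.isLt; have := j.isLt; omega⟩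

/-- `P(ζ) = b(ζ) b(ζ^{-1})`. -/
def PPd {n : ℕ} (b : Fin (n + 1) → ℝ) (z : ℂ) : ℂ := evC b z * evC b z⁻¹

/-- `𝕁_P(a) = aᵀ T_n a − (1/2N) Σ_j P(ζ_j) log( a(ζ_j) a(ζ_j^{-1}) )`. -/
def Jd (N : ℕ) {n : ℕ} (c b a : Fin (n + 1) → ℝ) : ℝ :=
  dotProduct a ((Toep c).mulVec a) -
    (∑ j ∈ Idx N, (PPd b (zeta N j)).re *
        Real.log ((evC a (zeta N j) * evC a (zeta N j)⁻¹).re)) / (2 * N)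

/-- `γ_t(a) = (1/2N) Σ_j ζ_j^t b(ζ_j)/a(ζ_j)` (a real number). -/
def gam (N : ℕ) {n : ℕ} (b a : Fin (n + 1) → ℝ) (t : ℤ) : ℝ :=
  ((∑ j ∈ Idx N, zeta N j ^ t * evC b (zeta N j) / evC a (zeta N j)) / (2 * N)).re

/-- The matrix `T_γ(a)` with `(i,j)` entry `γ_{j−i}(a)`. -/
def Tgam (N : ℕ) {n : ℕ} (b a : Fin (n + 1) → ℝ) :
    Matrix (Fin (n + 1)) (Fin (n + 1)) ℝ :=
  fun i j => gam N b a ((j.val : ℤ) - (i.val : ℤ))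

/-- `c̃_k(a) = (1/2N) Σ_j ζ_j^k P(ζ_j)/( a(ζ_j) a(ζ_j^{-1}) )` (a real number). -/
def ctil (N : ℕ) {n : ℕ} (b a : Fin (n + 1) → ℝ) (k : ℤ) : ℝ :=
  ((∑ j ∈ Idx N, zeta N j ^ k * PPd b (zeta N j) /
      (evC a (zeta N j) * evC a (zeta N j)⁻¹)) / (2 * N)).re

/-- The symmetric Toeplitz matrix `T_n(a)` with `(i,j)` entry `c̃_{|i−j|}(a)`. -/
def TnA (N : ℕ) {n : ℕ} (b a : Fin (n + 1) → ℝ) :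
    Matrix (Fin (n + 1)) (Fin (n + 1)) ℝ :=
  fun i j => ctil N b a ((max ((i : ℕ) - (j : ℕ)) ((j : ℕ) - (i : ℕ)) : ℕ) : ℤ)

/-!
Expanding `b(ζ)` and `a(ζ)` inside the sums, the `i`-th entry of `T_γ(a) b` is the real part of
`(1/2N) Σ_j ζ_j^{-i} P(ζ_j) / a(ζ_j)`, and the `i`-th entry of `T_n(a) a` is the real part of
`(1/2N) Σ_j ζ_j^{i} P(ζ_j) / a(ζ_j^{-1})`. The two sums agree because `ζ ↦ ζ⁻¹` permutes the
`2N`-th roots of unity and `P(ζ⁻¹) = P(ζ)`.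
-/

lemma zeta_neg (N : ℕ) (j : ℤ) : zeta N (-j) = (zeta N j)⁻¹ := by
  rw [zeta, zeta, ← Complex.exp_neg]
  push_cast
  ring_nf

lemma zeta_ne_zero (N : ℕ) (j : ℤ) : zeta N j ≠ 0 := Complex.exp_ne_zero _

lemma zeta_natCast_self {N : ℕ} (hN : N ≠ 0) : zeta N N = -1 := by
  have h : (N : ℂ) ≠ 0 := Nat.cast_ne_zero.mpr hN
  rw [zeta, show (Real.pi : ℂ) * I * ((N : ℤ) : ℂ) / N = Real.pi * I by push_cast; field_simp]
  exact Complex.exp_pi_mul_I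

/-- Negation modulo `2N`, read on the representatives `Idx N = {-N+1, …, N}`. -/
def negIdx (N : ℕ) (j : ℤ) : ℤ := if j = N then N else -j

lemma negIdx_mem {N : ℕ} {j : ℤ} (hj : j ∈ Idx N) : negIdx N j ∈ Idx N := by
  simp only [Idx, mem_Icc, negIdx] at hj ⊢
  split_ifs <;> omega

lemma negIdx_negIdx {N : ℕ} {j : ℤ} (hj : j ∈ Idx N) : negIdx N (negIdx N j) = j := by
  simp only [Idx, mem_Icc, negIdx] at hj ⊢
  split_ifs <;> omega

lemma zeta_negIdx {N : ℕ} {j : ℤ} (hj : j ∈ Idx N) : zeta N (negIdx N j) = (zeta N j)⁻¹ := by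
  unfold negIdx
  split_ifs with h
  · have hN : N ≠ 0 := by simp only [Idx, mem_Icc] at hj; omega
    rw [h, zeta_natCast_self hN, inv_neg, inv_one]
  · exact zeta_neg N j

lemma sum_Idx_zeta_inv (N : ℕ) (F : ℂ → ℂ) :
    ∑ j ∈ Idx N, F (zeta N j)⁻¹ = ∑ j ∈ Idx N, F (zeta N j) :=
  sum_nbij' (negIdx N) (negIdx N) (fun _ => negIdx_mem) (fun _ => negIdx_mem)
    (fun _ => negIdx_negIdx) (fun _ => negIdx_negIdx)
    (fun _ hj => by rw [zeta_negIdx hj])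

section Laurent

variable {n : ℕ}

lemma sum_mul_zpow_sub_eq_evC (c : Fin (n + 1) → ℝ) {z : ℂ} (hz : z ≠ 0) (m : ℤ) :
    ∑ k : Fin (n + 1), (c k : ℂ) * z ^ (m - k) = z ^ m * evC c z := by
  simp only [evC, mul_sum, zpow_sub₀ hz, _root_.zpow_neg]
  exact sum_congr rfl fun _ _ => by ring

lemma sum_mul_zpow_sub_eq_evC_inv (c : Fin (n + 1) → ℝ) {z : ℂ} (hz : z ≠ 0) (m : ℤ) :
    ∑ k : Fin (n + 1), (c k : ℂ) * z ^ ((k : ℤ) - m) = z ^ (-m) * evC c z⁻¹ := by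
  calc ∑ k : Fin (n + 1), (c k : ℂ) * z ^ ((k : ℤ) - m)
      = ∑ k : Fin (n + 1), (c k : ℂ) * z⁻¹ ^ (m - k) := by simp only [_root_.inv_zpow', neg_sub]
    _ = z ^ (-m) * evC c z⁻¹ := by
      rw [sum_mul_zpow_sub_eq_evC c (inv_ne_zero hz), _root_.inv_zpow']

lemma PPd_inv (b : Fin (n + 1) → ℝ) (z : ℂ) : PPd b z⁻¹ = PPd b z := by
  rw [PPd, PPd, inv_inv, mul_comm]

end Laurent

section Toeplitz

variable (N : ℕ) {n : ℕ} (b a : Fin (n + 1) → ℝ)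

lemma ctil_neg (k : ℤ) : ctil N b a (-k) = ctil N b a k := by
  unfold ctil
  rw [← sum_Idx_zeta_inv N (fun z => z ^ k * PPd b z / (evC a z * evC a z⁻¹))]
  congr 2
  refine sum_congr rfl fun j _ => ?_
  rw [PPd_inv, inv_inv, _root_.inv_zpow', mul_comm (evC a _⁻¹)]

lemma TnA_apply (i k : Fin (n + 1)) : TnA N b a i k = ctil N b a ((i : ℤ) - k) := by
  unfold TnA
  rcases le_total (k : ℕ) i with h | h
  · rw [Nat.sub_eq_zero_of_le h, max_eq_left (Nat.zero_le _)]
    congr 1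
    omega
  · rw [Nat.sub_eq_zero_of_le h, max_eq_right (Nat.zero_le _), ← ctil_neg]
    congr 1
    omega

lemma sum_mul_gam (i : ℤ) :
    ∑ k : Fin (n + 1), b k * gam N b a ((k : ℤ) - i) =
      ((∑ j ∈ Idx N, zeta N j ^ (-i) * PPd b (zeta N j) / evC a (zeta N j)) / (2 * N)).re := by
  simp only [gam, ← re_ofReal_mul, ← re_sum, mul_div_assoc', ← sum_div, mul_sum]
  rw [sum_comm]
  congr 3 with j
  simp only [← sum_div, ← mul_assoc, ← sum_mul,
    sum_mul_zpow_sub_eq_evC_inv b (zeta_ne_zero N j), PPd]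
  ring

lemma sum_ctil_mul (ha : ∀ j ∈ Idx N, evC a (zeta N j) ≠ 0) (i : ℤ) :
    ∑ k : Fin (n + 1), ctil N b a (i - (k : ℤ)) * a k =
      ((∑ j ∈ Idx N, zeta N j ^ i * PPd b (zeta N j) / evC a (zeta N j)⁻¹) / (2 * N)).re := by
  simp only [ctil, mul_comm _ (a _), ← re_ofReal_mul, ← re_sum, mul_div_assoc', ← sum_div,
    mul_sum]
  rw [sum_comm]
  congr 2
  refine sum_congr rfl fun j hj => ?_
  simp only [← sum_div, ← mul_assoc, ← sum_mul, sum_mul_zpow_sub_eq_evC a (zeta_ne_zero N j)]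
  rw [mul_right_comm, mul_comm (evC a _), mul_div_mul_right _ _ (ha j hj)]

lemma sum_mul_gam_eq_sum_ctil_mul (ha : ∀ j ∈ Idx N, evC a (zeta N j) ≠ 0) (i : ℤ) :
    ∑ k : Fin (n + 1), b k * gam N b a ((k : ℤ) - i) =
      ∑ k : Fin (n + 1), ctil N b a (i - (k : ℤ)) * a k := by
  rw [sum_mul_gam, sum_ctil_mul N b a ha,
    ← sum_Idx_zeta_inv N (fun z => z ^ i * PPd b z / evC a z⁻¹)]
  simp only [PPd_inv, inv_inv, _root_.inv_zpow']

end Toeplitz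

theorem stmt7_general (N n : ℕ)
    (b : Fin (n + 1) → ℝ)
    (a : Fin (n + 1) → ℝ) (ha : ∀ j ∈ Idx N, evC a (zeta N j) ≠ 0) :
    (Tgam N b a).mulVec b = (TnA N b a).mulVec a ∧
    ∀ i : Fin (n + 1),
      ∑ k : Fin (n + 1), b k * gam N b a ((k.val : ℤ) - (i.val : ℤ)) =
        ∑ k : Fin (n + 1), ctil N b a ((i.val : ℤ) - (k.val : ℤ)) * a k := by
  have entrywise (i : Fin (n + 1)) := sum_mul_gam_eq_sum_ctil_mul N b a ha i
  refine ⟨funext fun i => ?_, entrywise⟩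
  simp only [mulVec, dotProduct, Tgam, TnA_apply, ← entrywise, mul_comm (b _)]

/-- `T_γ(a) b = T_n(a) a`, i.e. for every `i = 0, …, n`,
`Σ_{k=0}^n b_k γ_{k−i}(a) = Σ_{k=0}^n c̃_{i−k}(a) a_k`. -/
theorem stmt7 (N n : ℕ) (hn : 1 ≤ n) (hNn : n < N)
    (b : Fin (n + 1) → ℝ) (hb0 : b 0 = 1)
    (a : Fin (n + 1) → ℝ) (ha : ∀ j ∈ Idx N, evC a (zeta N j) ≠ 0) :
    (Tgam N b a).mulVec b = (TnA N b a).mulVec a ∧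
    ∀ i : Fin (n + 1),
      ∑ k : Fin (n + 1), b k * gam N b a ((k.val : ℤ) - (i.val : ℤ)) =
        ∑ k : Fin (n + 1), ctil N b a ((i.val : ℤ) - (k.val : ℤ)) * a k :=
  stmt7_general N n b a ha

end
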